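/- The family (i, j) ↦ |QNC(p_i, p_j)|², indexed by pairs of positive integers i, j, is summable; that is, ∑_{i=1}^∞ ∑_{j=1}^∞ |R_{ij}|² < ∞, where R_{ij} = QNC(p_i, p_j). -/

import Mathlib

open Real

/-- `F(x,y) = ∑_{k=1}^∞ x^{k-1} · y^{-x^k} / (1 - y^{-x^k})²`. -/
noncomputable def F (x y : ℝ) : ℝ :=
  ∑' k : ℕ, x ^ (k : ℝ) * y ^ (-(x ^ ((k : ℝ) + 1))) / (1 - y ^ (-(x ^ ((k : ℝ) + 1)))) ^ 2

/-- `QNC(x,y) = (1/(12xy)) · ( x(y-1)F(x,y) - y(x-1)F(y,x) )`. -/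
noncomputable def QNC (x y : ℝ) : ℝ :=
  1 / (12 * x * y) * (x * (y - 1) * F x y - y * (x - 1) * F y x)

/-- `nthPrime i` is the `(i+1)`-st prime, so `nthPrime 0 = 2`, `nthPrime 1 = 3`, ... -/
noncomputable def nthPrime (i : ℕ) : ℕ := Nat.nth Nat.Prime i

/-! For `x, y ≥ 2` the base `y ^ (-x ^ (k + 1))` of the `k`-th summand of `F x y` is at most `1/4`,
and `x ^ (k + 1) ≥ (k + 1) x` turns the summand into at most `(16/9) y ^ (-x) 2 ^ (-k)`; hence
`F x y ≤ (32/9) y ^ (-x)` and `|QNC x y| ≤ (8/27) (y ^ (-x) + x ^ (-y)) ≤ 1`. Since `p i ≥ i + 2`,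
`p j ^ (-p i) ≤ 2 ^ (-i) (j + 2) ^ (-2)` is summable over pairs, so `|QNC (p i) (p j)|` is summable,
and a fortiori so is its square. -/

lemma two_mul_le_two_rpow {x : ℝ} (hx : 2 ≤ x) : 2 * x ≤ 2 ^ x := by
  have h := one_add_mul_self_le_rpow_one_add (s := 1) (by norm_num) (p := x - 1) (by linarith)
  calc 2 * x = 2 * (1 + (x - 1) * 1) := by ring
    _ ≤ 2 * (1 + 1) ^ (x - 1) := by gcongr
    _ = 2 ^ x := by rw [one_add_one_eq_two, rpow_sub two_pos, rpow_one]; field_simp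

lemma mul_rpow_neg_le_half {x y : ℝ} (hx : 2 ≤ x) (hy : 2 ≤ y) : x * y ^ (-x) ≤ 1 / 2 := by
  have h2x : (0 : ℝ) < 2 ^ x := rpow_pos_of_pos two_pos x
  calc x * y ^ (-x) ≤ x * 2 ^ (-x) :=
        mul_le_mul_of_nonneg_left (rpow_le_rpow_of_nonpos two_pos hy (by linarith)) (by linarith)
    _ = x / 2 ^ x := by rw [rpow_neg zero_le_two, div_eq_mul_inv]
    _ ≤ 1 / 2 := by
        rw [div_le_div_iff₀ h2x two_pos]
        linarith [two_mul_le_two_rpow hx]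

lemma rpow_neg_le_quarter {y e : ℝ} (hy : 2 ≤ y) (he : 2 ≤ e) : y ^ (-e) ≤ 1 / 4 := by
  calc y ^ (-e) ≤ y ^ (-2 : ℝ) := rpow_le_rpow_of_exponent_le (by linarith) (by linarith)
    _ ≤ 2 ^ (-2 : ℝ) := rpow_le_rpow_of_nonpos two_pos hy (by norm_num)
    _ = 1 / 4 := by norm_num [rpow_neg, rpow_two]

lemma mul_add_one_le_rpow_add_one {x : ℝ} (hx : 2 ≤ x) (k : ℕ) :
    x * (k + 1) ≤ x ^ ((k : ℝ) + 1) := by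
  have hk : (k : ℝ) + 1 ≤ x ^ k := by
    have h := one_add_mul_le_pow (a := x - 1) (by linarith) k
    rw [add_sub_cancel] at h
    nlinarith [(Nat.cast_nonneg k : (0 : ℝ) ≤ k)]
  rw [rpow_add_one (by linarith), rpow_natCast, mul_comm x]
  gcongr

lemma rpow_mul_rpow_neg_rpow_le {x y : ℝ} (hx : 2 ≤ x) (hy : 2 ≤ y) (k : ℕ) :
    x ^ (k : ℝ) * y ^ (-(x ^ ((k : ℝ) + 1))) ≤ y ^ (-x) * (1 / 2) ^ k := by
  have hpow : y ^ (-(x * ((k : ℝ) + 1))) = (y ^ (-x)) ^ (k + 1) := by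
    rw [← rpow_natCast, ← rpow_mul (by linarith)]; push_cast; ring_nf
  calc x ^ (k : ℝ) * y ^ (-(x ^ ((k : ℝ) + 1))) ≤ x ^ (k : ℝ) * y ^ (-(x * ((k : ℝ) + 1))) := by
        gcongr
        · linarith
        · exact mul_add_one_le_rpow_add_one hx k
    _ = y ^ (-x) * (x * y ^ (-x)) ^ k := by rw [hpow, rpow_natCast]; ring
    _ ≤ y ^ (-x) * (1 / 2) ^ k := by
        gcongr
        exact mul_rpow_neg_le_half hx hy

lemma F_summand_nonneg {x y : ℝ} (hx : 0 ≤ x) (hy : 0 ≤ y) (k : ℕ) :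
    0 ≤ x ^ (k : ℝ) * y ^ (-(x ^ ((k : ℝ) + 1))) / (1 - y ^ (-(x ^ ((k : ℝ) + 1)))) ^ 2 := by
  positivity

lemma F_summand_le {x y : ℝ} (hx : 2 ≤ x) (hy : 2 ≤ y) (k : ℕ) :
    x ^ (k : ℝ) * y ^ (-(x ^ ((k : ℝ) + 1))) / (1 - y ^ (-(x ^ ((k : ℝ) + 1)))) ^ 2
      ≤ 16 / 9 * y ^ (-x) * (1 / 2) ^ k := by
  set a := y ^ (-(x ^ ((k : ℝ) + 1)))
  have ha : a ≤ 1 / 4 := rpow_neg_le_quarter hy <| by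
    nlinarith [mul_add_one_le_rpow_add_one hx k, (Nat.cast_nonneg k : (0 : ℝ) ≤ k)]
  have ha0 : 0 ≤ a := rpow_nonneg (by linarith) _
  have hden : 9 / 16 ≤ (1 - a) ^ 2 := by nlinarith
  calc x ^ (k : ℝ) * a / (1 - a) ^ 2 ≤ x ^ (k : ℝ) * a / (9 / 16) := by gcongr
    _ ≤ 16 / 9 * y ^ (-x) * (1 / 2) ^ k := by
        linarith [rpow_mul_rpow_neg_rpow_le hx hy k]

lemma F_nonneg {x y : ℝ} (hx : 0 ≤ x) (hy : 0 ≤ y) : 0 ≤ F x y :=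
  tsum_nonneg (F_summand_nonneg hx hy)

lemma F_le {x y : ℝ} (hx : 2 ≤ x) (hy : 2 ≤ y) : F x y ≤ 32 / 9 * y ^ (-x) := by
  have hgeom : Summable fun k : ℕ => 16 / 9 * y ^ (-x) * (1 / 2 : ℝ) ^ k :=
    summable_geometric_two.mul_left _
  have hF : Summable fun k : ℕ =>
      x ^ (k : ℝ) * y ^ (-(x ^ ((k : ℝ) + 1))) / (1 - y ^ (-(x ^ ((k : ℝ) + 1)))) ^ 2 :=
    hgeom.of_nonneg_of_le (F_summand_nonneg (by linarith) (by linarith)) (F_summand_le hx hy)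
  calc F x y ≤ ∑' k : ℕ, 16 / 9 * y ^ (-x) * (1 / 2 : ℝ) ^ k :=
        hF.tsum_le_tsum (F_summand_le hx hy) hgeom
    _ = 32 / 9 * y ^ (-x) := by rw [tsum_mul_left, tsum_geometric_two]; ring

lemma abs_QNC_le_F {x y : ℝ} (hx : 1 ≤ x) (hy : 1 ≤ y) :
    |QNC x y| ≤ (F x y + F y x) / 12 := by
  have hFxy := F_nonneg (by linarith : (0 : ℝ) ≤ x) (by linarith : (0 : ℝ) ≤ y)
  have hFyx := F_nonneg (by linarith : (0 : ℝ) ≤ y) (by linarith : (0 : ℝ) ≤ x)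
  have hxy : 0 < 12 * x * y := by positivity
  have hdiff : |x * (y - 1) * F x y - y * (x - 1) * F y x| ≤ x * y * (F x y + F y x) := by
    rw [abs_le]; constructor <;> nlinarith [mul_nonneg (by linarith : (0 : ℝ) ≤ x) hFxy,
      mul_nonneg (by linarith : (0 : ℝ) ≤ y) hFyx]
  rw [QNC, abs_mul, abs_of_pos (one_div_pos.2 hxy), one_div, inv_mul_le_iff₀ hxy]
  linarith

lemma abs_QNC_le {x y : ℝ} (hx : 2 ≤ x) (hy : 2 ≤ y) :
    |QNC x y| ≤ 8 / 27 * (y ^ (-x) + x ^ (-y)) := by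
  linarith [abs_QNC_le_F (by linarith : (1 : ℝ) ≤ x) (by linarith : (1 : ℝ) ≤ y),
    F_le hx hy, F_le hy hx]

lemma summable_rpow_neg {p : ℕ → ℝ} (hp : ∀ i : ℕ, (i : ℝ) + 2 ≤ p i) :
    Summable fun ij : ℕ × ℕ => p ij.2 ^ (-p ij.1) := by
  have hinv_sq : Summable fun j : ℕ => 1 / ((j : ℝ) + 2) ^ 2 := by
    simpa using (summable_nat_add_iff 2).2 (Real.summable_one_div_nat_pow.2 one_lt_two)
  refine (summable_geometric_two.mul_of_nonneg hinv_sq (fun i => by positivity)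
    (fun j => by positivity)).of_nonneg_of_le (fun ij => rpow_nonneg (by linarith [hp ij.2]) _)
    fun ⟨i, j⟩ => ?_
  have hpj := hp j
  have hpj2 : (2 : ℝ) ≤ p j := by linarith [(Nat.cast_nonneg j : (0 : ℝ) ≤ j)]
  calc p j ^ (-p i) ≤ p j ^ (-((i + 2 : ℕ) : ℝ)) :=
        rpow_le_rpow_of_exponent_le (by linarith) (by push_cast; linarith [hp i])
    _ = 1 / (p j ^ 2 * p j ^ i) := by rw [rpow_neg (by linarith), rpow_natCast, pow_add]; ring
    _ ≤ 1 / (((j : ℝ) + 2) ^ 2 * 2 ^ i) := by gcongr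
    _ = (1 / 2) ^ i * (1 / ((j : ℝ) + 2) ^ 2) := by rw [div_pow, one_pow]; field_simp

lemma summable_sq_abs_QNC {p : ℕ → ℝ} (hp : ∀ i : ℕ, (i : ℝ) + 2 ≤ p i) :
    Summable fun ij : ℕ × ℕ => |QNC (p ij.1) (p ij.2)| ^ 2 := by
  have hp2 : ∀ i, 2 ≤ p i := fun i => by linarith [hp i, (Nat.cast_nonneg i : (0 : ℝ) ≤ i)]
  have hu := summable_rpow_neg hp
  refine ((hu.add hu.prod_symm).mul_left (8 / 27)).of_nonneg_of_le (fun _ => by positivity)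
    fun ⟨i, j⟩ => ?_
  have hQ := abs_QNC_le (hp2 i) (hp2 j)
  have hQ1 : |QNC (p i) (p j)| ≤ 1 := by
    linarith [rpow_neg_le_quarter (hp2 j) (hp2 i), rpow_neg_le_quarter (hp2 i) (hp2 j)]
  exact (pow_le_of_le_one (abs_nonneg _) hQ1 two_ne_zero).trans hQ

/-- The family `(i, j) ↦ |QNC(p_i, p_j)|²` over pairs of positive integers
(reindexed from `0`) is summable: `∑_i ∑_j |R_{ij}|² < ∞`. -/
theorem summable_sq_abs_R :
    Summable (fun ij : ℕ × ℕ =>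
      |QNC (nthPrime ij.1 : ℝ) (nthPrime ij.2 : ℝ)| ^ 2) :=
  summable_sq_abs_QNC (p := fun i => (nthPrime i : ℝ)) fun i => by
    exact_mod_cast Nat.add_two_le_nth_prime i
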